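/- Consider the Common Atoms Model with parameters α, β > 0: let (π_k)_{k≥1} be GEM(α) weights and let (ω_{l,k})_{l≥1}, for k ≥ 1, be mutually independent GEM(β) weight sequences, with all stick variables jointly independent. Then E[∑_{k1≥1} ∑_{k2≥1} π_{k1} π_{k2} ∑_{l≥1} ω_{l,k1} ω_{l,k2}] = (1/(1+α))·(1/(1+β)) + (α/(1+α))·(1/(2β+1)). (This quantity is the probability P(y_{i,j} = y_{i',j'}) that two observations drawn from two distinct units of the Common Atoms Model with atomless base measure coincide.) -/

import Mathlib

/-!
The integrand is nonnegative, so the integral is computed in `ℝ≥0∞`, where the three nested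
sums commute with the integral. Each term factors by independence of the `V`-sticks from the
`W`-sticks: `E[π_{k₁} π_{k₂}] · E[∑_l ω_{l,k₁} ω_{l,k₂}]`. For `k₁ = k₂` the second factor is
`∑_l E[W²] E[(1-W)²]^l = 1/(1+β)`; for `k₁ ≠ k₂` the rows are independent and it is
`∑_l (E[W] E[1-W]^l)² = 1/(2β+1)`. Writing the weight as
`1/(2β+1) + (1/(1+β) - 1/(2β+1)) · [k₁ = k₂]` leaves
`∑_{k₁,k₂} E[π_{k₁} π_{k₂}] = E[(∑_k π_k)²] = 1`, because GEM weights sum to one almost surely,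
and `∑_k E[π_k²] = 1/(1+α)`.
-/

open MeasureTheory ProbabilityTheory
open scoped ENNReal

/-- The Beta(1, γ) distribution on [0,1]: density `x ↦ γ (1-x)^(γ-1)` w.r.t. Lebesgue
measure on `[0,1]`. -/
noncomputable def betaOne (γ : ℝ) : Measure ℝ :=
  (volume.restrict (Set.Icc (0:ℝ) 1)).withDensity
    fun x => ENNReal.ofReal (γ * (1 - x) ^ (γ - 1))

/-- Stick-breaking weights (0-indexed): `stick V k = V k * ∏_{i<k} (1 - V i)`. -/
noncomputable def stick {Ω : Type*} (V : ℕ → Ω → ℝ) (k : ℕ) (x : Ω) : ℝ :=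
  V k x * ∏ i ∈ Finset.range k, (1 - V i x)

open Filter Topology Finset

theorem summable_mul_of_le_one {a b : ℕ → ℝ} (ha : ∀ n, 0 ≤ a n) (hb0 : ∀ n, 0 ≤ b n)
    (hb1 : ∀ n, b n ≤ 1) (hsa : Summable a) : Summable fun n => a n * b n :=
  hsa.of_nonneg_of_le (fun n => mul_nonneg (ha n) (hb0 n))
    fun n => mul_le_of_le_one_right (ha n) (hb1 n)

theorem tsum_mul_le_of_le_one {a b : ℕ → ℝ} (ha : ∀ n, 0 ≤ a n) (hb0 : ∀ n, 0 ≤ b n)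
    (hb1 : ∀ n, b n ≤ 1) (hsa : Summable a) : ∑' n, a n * b n ≤ ∑' n, a n :=
  (summable_mul_of_le_one ha hb0 hb1 hsa).tsum_le_tsum
    (fun n => mul_le_of_le_one_right (ha n) (hb1 n)) hsa

theorem ENNReal.ofReal_mul_inv_one_sub_ofReal {a r : ℝ} (ha : 0 ≤ a) (hr0 : 0 ≤ r) (hr1 : r < 1) :
    ENNReal.ofReal a * (1 - ENNReal.ofReal r)⁻¹ = ENNReal.ofReal (a / (1 - r)) := by
  rw [← ENNReal.ofReal_one, ← ENNReal.ofReal_sub _ hr0,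
    ← ENNReal.ofReal_inv_of_pos (sub_pos.2 hr1), ← ENNReal.ofReal_mul ha, div_eq_mul_inv]

theorem ENNReal.tsum_tsum_mul_ite_eq {f : ℕ → ℕ → ℝ≥0∞} {a b d : ℝ≥0∞} (h : a = b + d) :
    ∑' (i : ℕ) (j : ℕ), f i j * (if i = j then a else b) =
      b * ∑' (i : ℕ) (j : ℕ), f i j + d * ∑' i, f i i := by
  have hsplit i j : f i j * (if i = j then a else b) =
      b * f i j + if j = i then d * f i j else 0 := by
    rcases eq_or_ne i j with rfl | hij
    · simp [h, mul_add, mul_comm]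
    · simp [hij, hij.symm, mul_comm]
  simp_rw [hsplit, ENNReal.tsum_add, tsum_ite_eq, ENNReal.tsum_mul_left]

theorem ProbabilityTheory.iIndepFun.lintegral_mul_of_disjoint {Ω ι β : Type*}
    [MeasurableSpace Ω] [mβ : MeasurableSpace β] {μ : Measure Ω} {X : ι → Ω → β}
    (hX : iIndepFun X μ) (hm : ∀ i, Measurable (X i)) {S T : Set ι} (hST : Disjoint S T)
    {f g : Ω → ℝ≥0∞} (hf : Measurable[⨆ i ∈ S, mβ.comap (X i)] f)
    (hg : Measurable[⨆ i ∈ T, mβ.comap (X i)] g) :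
    ∫⁻ ω, f ω * g ω ∂μ = (∫⁻ ω, f ω ∂μ) * ∫⁻ ω, g ω ∂μ :=
  lintegral_mul_eq_lintegral_mul_lintegral_of_independent_measurableSpace
    (iSup₂_le fun i _ => (hm i).comap_le) (iSup₂_le fun i _ => (hm i).comap_le)
    (indep_iSup_of_disjoint (fun i => (hm i).comap_le) ((iIndepFun_iff_iIndep _ _ _).1 hX) hST)
    hf hg

theorem measurable_iSup_comap {Ω ι β : Type*} [mβ : MeasurableSpace β] {X : ι → Ω → β}
    {S : Set ι} {i : ι} (hi : i ∈ S) : Measurable[⨆ j ∈ S, mβ.comap (X j)] (X i) :=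
  measurable_iff_comap_le.2 (le_iSup₂ (f := fun j (_ : j ∈ S) => mβ.comap (X j)) i hi)

theorem measurable_stick {Ω : Type*} {m : MeasurableSpace Ω} {U : ℕ → Ω → ℝ}
    (hU : ∀ i, Measurable[m] (U i)) (k : ℕ) : Measurable[m] (stick U k) :=
  (hU k).mul (Finset.measurable_prod _ fun i _ => measurable_const.sub (hU i))

theorem measurable_ofReal_stick_mul_stick {Ω : Type*} {m : MeasurableSpace Ω}
    {U U' : ℕ → Ω → ℝ} (hU : ∀ i, Measurable[m] (U i)) (hU' : ∀ i, Measurable[m] (U' i))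
    (k k' : ℕ) : Measurable[m] fun x => ENNReal.ofReal (stick U k x * stick U' k' x) :=
  ENNReal.measurable_ofReal.comp ((measurable_stick hU k).mul (measurable_stick hU' k'))

section Sticks

variable {Ω : Type*} {U : ℕ → Ω → ℝ} {x : Ω}

theorem sum_range_stick (U : ℕ → Ω → ℝ) (x : Ω) (n : ℕ) :
    ∑ k ∈ range n, stick U k x = 1 - ∏ i ∈ range n, (1 - U i x) := by
  induction n with
  | zero => simp
  | succ n ih => rw [sum_range_succ, prod_range_succ, ih, stick]; ring

theorem prod_one_sub_nonneg (hU : ∀ i, U i x ∈ Set.Icc (0 : ℝ) 1) (n : ℕ) :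
    0 ≤ ∏ i ∈ range n, (1 - U i x) :=
  prod_nonneg fun i _ => sub_nonneg.2 (hU i).2

theorem stick_nonneg (hU : ∀ i, U i x ∈ Set.Icc (0 : ℝ) 1) (k : ℕ) : 0 ≤ stick U k x :=
  mul_nonneg (hU k).1 (prod_one_sub_nonneg hU k)

theorem sum_range_stick_le_one (hU : ∀ i, U i x ∈ Set.Icc (0 : ℝ) 1) (n : ℕ) :
    ∑ k ∈ range n, stick U k x ≤ 1 := by
  rw [sum_range_stick]
  linarith [prod_one_sub_nonneg hU n]

theorem summable_stick (hU : ∀ i, U i x ∈ Set.Icc (0 : ℝ) 1) : Summable (stick U · x) :=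
  summable_of_sum_range_le (stick_nonneg hU) (sum_range_stick_le_one hU)

theorem tsum_stick_le_one (hU : ∀ i, U i x ∈ Set.Icc (0 : ℝ) 1) : ∑' k, stick U k x ≤ 1 :=
  Real.tsum_le_of_sum_range_le (stick_nonneg hU) (sum_range_stick_le_one hU)

theorem stick_le_one (hU : ∀ i, U i x ∈ Set.Icc (0 : ℝ) 1) (k : ℕ) : stick U k x ≤ 1 :=
  ((summable_stick hU).le_tsum k fun j _ => stick_nonneg hU j).trans (tsum_stick_le_one hU)

theorem hasSum_stick_of_tendsto (hU : ∀ i, U i x ∈ Set.Icc (0 : ℝ) 1)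
    (h : Tendsto (fun n => ∏ i ∈ range n, (1 - U i x)) atTop (𝓝 0)) :
    HasSum (stick U · x) 1 := by
  rw [hasSum_iff_tendsto_nat_of_nonneg (stick_nonneg hU)]
  simpa [sum_range_stick] using (tendsto_const_nhds (x := (1 : ℝ))).sub h

theorem tsum_tsum_stick_mul_nonneg {V : ℕ → Ω → ℝ} {W : ℕ → ℕ → Ω → ℝ}
    (hV : ∀ k, V k x ∈ Set.Icc (0 : ℝ) 1) (hW : ∀ k l, W k l x ∈ Set.Icc (0 : ℝ) 1) :
    0 ≤ ∑' (k1 : ℕ) (k2 : ℕ), stick V k1 x * stick V k2 x *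
      ∑' l : ℕ, stick (W k1) l x * stick (W k2) l x :=
  tsum_nonneg fun k1 => tsum_nonneg fun k2 =>
    mul_nonneg (mul_nonneg (stick_nonneg hV k1) (stick_nonneg hV k2))
      (tsum_nonneg fun l => mul_nonneg (stick_nonneg (hW k1) l) (stick_nonneg (hW k2) l))

theorem ofReal_tsum_tsum_stick {V : ℕ → Ω → ℝ} {W : ℕ → ℕ → Ω → ℝ}
    (hV : ∀ k, V k x ∈ Set.Icc (0 : ℝ) 1) (hW : ∀ k l, W k l x ∈ Set.Icc (0 : ℝ) 1) :
    ENNReal.ofReal (∑' (k1 : ℕ) (k2 : ℕ), stick V k1 x * stick V k2 x *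
        ∑' l : ℕ, stick (W k1) l x * stick (W k2) l x) =
      ∑' (k1 : ℕ) (k2 : ℕ), ENNReal.ofReal (stick V k1 x * stick V k2 x) *
        ∑' l : ℕ, ENNReal.ofReal (stick (W k1) l x * stick (W k2) l x) := by
  have hπ0 := stick_nonneg hV
  have hω0 k := stick_nonneg (hW k)
  set S : ℕ → ℕ → ℝ := fun k1 k2 => ∑' l, stick (W k1) l x * stick (W k2) l x
  have hS0 k1 k2 : 0 ≤ S k1 k2 := tsum_nonneg fun l => mul_nonneg (hω0 k1 l) (hω0 k2 l)
  have hS1 k1 k2 : S k1 k2 ≤ 1 :=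
    (tsum_mul_le_of_le_one (hω0 k1) (hω0 k2) (stick_le_one (hW k2)) (summable_stick (hW k1))).trans
      (tsum_stick_le_one (hW k1))
  have hM0 k1 k2 : 0 ≤ stick V k1 x * stick V k2 x := mul_nonneg (hπ0 k1) (hπ0 k2)
  have hMsum k1 := summable_mul_of_le_one (hM0 k1) (hS0 k1) (hS1 k1)
    ((summable_stick hV).mul_left (stick V k1 x))
  have hM1 k1 : ∑' k2, stick V k1 x * stick V k2 x * S k1 k2 ≤ stick V k1 x := calc
    _ ≤ ∑' k2, stick V k1 x * stick V k2 x :=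
      tsum_mul_le_of_le_one (hM0 k1) (hS0 k1) (hS1 k1) ((summable_stick hV).mul_left _)
    _ = stick V k1 x * ∑' k2, stick V k2 x := tsum_mul_left
    _ ≤ stick V k1 x := mul_le_of_le_one_right (hπ0 k1) (tsum_stick_le_one hV)
  have hM0' k1 : 0 ≤ ∑' k2, stick V k1 x * stick V k2 x * S k1 k2 :=
    tsum_nonneg fun k2 => mul_nonneg (hM0 k1 k2) (hS0 k1 k2)
  rw [ENNReal.ofReal_tsum_of_nonneg hM0' ((summable_stick hV).of_nonneg_of_le hM0' hM1)]
  refine tsum_congr fun k1 => ?_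
  rw [ENNReal.ofReal_tsum_of_nonneg (fun k2 => mul_nonneg (hM0 k1 k2) (hS0 k1 k2)) (hMsum k1)]
  refine tsum_congr fun k2 => ?_
  rw [ENNReal.ofReal_mul (hM0 k1 k2), ENNReal.ofReal_tsum_of_nonneg
    (fun l => mul_nonneg (hω0 k1 l) (hω0 k2 l))
    (summable_mul_of_le_one (hω0 k1) (hω0 k2) (stick_le_one (hW k2)) (summable_stick (hW k1)))]

end Sticks

section IidSticks

variable {Ω : Type*} [MeasurableSpace Ω] {μ : Measure Ω} {U : ℕ → Ω → ℝ} {ν : Measure ℝ}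

theorem ae_forall_mem_Icc_of_map_eq (hmU : ∀ i, Measurable (U i)) (hlaw : ∀ i, μ.map (U i) = ν)
    (hν : ∀ᵐ v ∂ν, v ∈ Set.Icc (0 : ℝ) 1) : ∀ᵐ x ∂μ, ∀ i, U i x ∈ Set.Icc (0 : ℝ) 1 :=
  ae_all_iff.2 fun i => (ae_map_iff (hmU i).aemeasurable measurableSet_Icc).1 (hlaw i ▸ hν)

theorem lintegral_prod_comp_of_iIndepFun (hU : iIndepFun U μ) (hmU : ∀ i, Measurable (U i))
    (hlaw : ∀ i, μ.map (U i) = ν) {g : ℝ → ℝ≥0∞} (hg : Measurable g) (s : Finset ℕ) :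
    ∫⁻ x, ∏ i ∈ s, g (U i x) ∂μ = (∫⁻ v, g v ∂ν) ^ s.card := by
  rw [lintegral_prod_eq_prod_lintegral_of_indepFun s (fun i x => g (U i x))
    (hU.comp (fun _ => g) fun _ => hg) fun i => hg.comp (hmU i)]
  exact prod_eq_pow_card fun i _ => by rw [← hlaw i, lintegral_map hg (hmU i)]

theorem lintegral_ofReal_stick_pow (hU : iIndepFun U μ) (hmU : ∀ i, Measurable (U i))
    (hlaw : ∀ i, μ.map (U i) = ν) (hν : ∀ᵐ v ∂ν, v ∈ Set.Icc (0 : ℝ) 1) (k p : ℕ) :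
    ∫⁻ x, ENNReal.ofReal (stick U k x ^ p) ∂μ =
      (∫⁻ v, ENNReal.ofReal (v ^ p) ∂ν) * (∫⁻ v, ENNReal.ofReal ((1 - v) ^ p) ∂ν) ^ k := by
  have hfactor : ∀ᵐ x ∂μ, ENNReal.ofReal (stick U k x ^ p) =
      ENNReal.ofReal (U k x ^ p) * ∏ i ∈ range k, ENNReal.ofReal ((1 - U i x) ^ p) := by
    filter_upwards [ae_forall_mem_Icc_of_map_eq hmU hlaw hν] with x hx
    rw [stick, mul_pow, ← prod_pow, ENNReal.ofReal_mul (pow_nonneg (hx k).1 p),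
      ENNReal.ofReal_prod_of_nonneg fun i _ => pow_nonneg (sub_nonneg.2 (hx i).2) p]
  have hf : Measurable fun v : ℝ => ENNReal.ofReal (v ^ p) := by fun_prop
  have hg : Measurable fun v : ℝ => ENNReal.ofReal ((1 - v) ^ p) := by fun_prop
  rw [lintegral_congr_ae hfactor, hU.lintegral_mul_of_disjoint hmU (S := {k}) (T := Set.Iio k)
      (f := fun x => ENNReal.ofReal (U k x ^ p))
      (g := fun x => ∏ i ∈ range k, ENNReal.ofReal ((1 - U i x) ^ p)) (by simp)
      (hf.comp (measurable_iSup_comap rfl))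
      (Finset.measurable_prod _ fun i hi => hg.comp (measurable_iSup_comap (mem_range.1 hi))),
    lintegral_prod_comp_of_iIndepFun hU hmU hlaw hg, card_range, ← hlaw k,
    lintegral_map hf (hmU k)]

theorem ae_tendsto_prod_one_sub (hU : iIndepFun U μ) (hmU : ∀ i, Measurable (U i))
    (hlaw : ∀ i, μ.map (U i) = ν) (hν : ∀ᵐ v ∂ν, v ∈ Set.Icc (0 : ℝ) 1)
    (hc : ∫⁻ v, ENNReal.ofReal (1 - v) ∂ν < 1) :
    ∀ᵐ x ∂μ, Tendsto (fun n => ∏ i ∈ range n, (1 - U i x)) atTop (𝓝 0) := by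
  have hg : Measurable fun v : ℝ => ENNReal.ofReal (1 - v) := by fun_prop
  have hm n : Measurable fun x => ∏ i ∈ range n, ENNReal.ofReal (1 - U i x) :=
    Finset.measurable_prod _ fun i _ => hg.comp (hmU i)
  -- The products have expectations `cⁿ` with `c < 1`, so a.s. their sum is finite.
  have hfin : ∫⁻ x, ∑' n, ∏ i ∈ range n, ENNReal.ofReal (1 - U i x) ∂μ ≠ ∞ := by
    simp_rw [lintegral_tsum fun n => (hm n).aemeasurable,
      lintegral_prod_comp_of_iIndepFun hU hmU hlaw hg, card_range, ENNReal.tsum_geometric]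
    exact ENNReal.inv_ne_top.2 (tsub_pos_of_lt hc).ne'
  filter_upwards [ae_lt_top (Measurable.tsum hm) hfin, ae_forall_mem_Icc_of_map_eq hmU hlaw hν]
    with x hx h01
  refine ((ENNReal.tendsto_toReal ENNReal.zero_ne_top).comp
    (ENNReal.tendsto_atTop_zero_of_tsum_ne_top hx.ne)).congr fun n => ?_
  rw [Function.comp_apply, ← ENNReal.ofReal_prod_of_nonneg fun i _ => sub_nonneg.2 (h01 i).2,
    ENNReal.toReal_ofReal (prod_one_sub_nonneg h01 n)]

theorem tsum_tsum_lintegral_ofReal_stick_mul_stick (hU : iIndepFun U μ)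
    (hmU : ∀ i, Measurable (U i)) (hlaw : ∀ i, μ.map (U i) = ν)
    (hν : ∀ᵐ v ∂ν, v ∈ Set.Icc (0 : ℝ) 1) (hc : ∫⁻ v, ENNReal.ofReal (1 - v) ∂ν < 1) :
    ∑' (k1 : ℕ) (k2 : ℕ), ∫⁻ x, ENNReal.ofReal (stick U k1 x * stick U k2 x) ∂μ = 1 := by
  have := hU.isProbabilityMeasure
  have hm := measurable_ofReal_stick_mul_stick hmU hmU
  have hone : ∀ᵐ x ∂μ, ∑' (k1 : ℕ) (k2 : ℕ), ENNReal.ofReal (stick U k1 x * stick U k2 x) = 1 := by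
    filter_upwards [ae_tendsto_prod_one_sub hU hmU hlaw hν hc,
      ae_forall_mem_Icc_of_map_eq hmU hlaw hν] with x hP h01
    have hsum := hasSum_stick_of_tendsto h01 hP
    have hsumE : ∑' k, ENNReal.ofReal (stick U k x) = 1 := by
      rw [← ENNReal.ofReal_tsum_of_nonneg (stick_nonneg h01) hsum.summable, hsum.tsum_eq,
        ENNReal.ofReal_one]
    simp [ENNReal.ofReal_mul, stick_nonneg h01, ENNReal.tsum_mul_left, hsumE]
  simp_rw [← lintegral_tsum fun k2 => (hm _ k2).aemeasurable]
  rw [← lintegral_tsum fun k1 => (Measurable.tsum (hm k1)).aemeasurable,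
    lintegral_congr_ae hone, lintegral_one, measure_univ]

end IidSticks

section BetaOne

variable {γ : ℝ}

theorem betaOne_ae_mem_Icc (γ : ℝ) : ∀ᵐ v ∂betaOne γ, v ∈ Set.Icc (0 : ℝ) 1 :=
  withDensity_absolutelyContinuous _ _ (ae_restrict_mem measurableSet_Icc)

theorem intervalIntegrable_const_mul_rpow_sub_one (hγ : 0 < γ) :
    IntervalIntegrable (fun y => γ * y ^ (γ - 1)) volume 0 1 :=
  (intervalIntegral.intervalIntegrable_rpow' (by linarith)).const_mul γ

theorem intervalIntegrable_pow_mul_const_mul_rpow_sub_one (hγ : 0 < γ) (n : ℕ) :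
    IntervalIntegrable (fun y => y ^ n * (γ * y ^ (γ - 1))) volume 0 1 :=
  (intervalIntegrable_const_mul_rpow_sub_one hγ).continuousOn_mul (continuous_pow n).continuousOn

theorem lintegral_ofReal_betaOne (hγ : 0 < γ) {h : ℝ → ℝ} (hh : Continuous h)
    (h0 : ∀ v ∈ Set.Icc (0 : ℝ) 1, 0 ≤ h v) :
    ∫⁻ v, ENNReal.ofReal (h v) ∂betaOne γ =
      ENNReal.ofReal (∫ y in (0 : ℝ)..1, h (1 - y) * (γ * y ^ (γ - 1))) := by
  have hρ0 : ∀ v ∈ Set.Icc (0 : ℝ) 1, 0 ≤ γ * (1 - v) ^ (γ - 1) := fun v hv =>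
    mul_nonneg hγ.le (Real.rpow_nonneg (sub_nonneg.2 hv.2) _)
  have hρ : IntegrableOn (fun v => γ * (1 - v) ^ (γ - 1)) (Set.Icc 0 1) := by
    have := ((intervalIntegrable_const_mul_rpow_sub_one hγ).comp_sub_left 1).symm
    rw [sub_zero, sub_self] at this
    exact (intervalIntegrable_iff_integrableOn_Icc_of_le zero_le_one).1 this
  have hsubst := intervalIntegral.integral_comp_sub_left (a := 0) (b := 1)
    (fun v => h v * (γ * (1 - v) ^ (γ - 1))) (1 : ℝ)
  simp only [sub_sub_cancel, sub_zero, sub_self] at hsubst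
  rw [hsubst, intervalIntegral.integral_of_le zero_le_one, ← integral_Icc_eq_integral_Ioc,
    ofReal_integral_eq_lintegral_ofReal (hρ.continuousOn_mul hh.continuousOn isCompact_Icc)
      ((ae_restrict_iff' measurableSet_Icc).2 (ae_of_all _ fun v hv =>
        mul_nonneg (h0 v hv) (hρ0 v hv))),
    betaOne, lintegral_withDensity_eq_lintegral_mul₀ (by fun_prop) (by fun_prop)]
  refine setLIntegral_congr_fun measurableSet_Icc fun v hv => ?_
  rw [Pi.mul_apply, ← ENNReal.ofReal_mul (hρ0 v hv), mul_comm]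

theorem integral_pow_mul_const_mul_rpow_sub_one (hγ : 0 < γ) (n : ℕ) :
    ∫ y in (0 : ℝ)..1, y ^ n * (γ * y ^ (γ - 1)) = γ / (γ + n) := by
  have hpow : ∀ y ∈ Set.uIoc (0 : ℝ) 1, y ^ n * (γ * y ^ (γ - 1)) = γ * y ^ (γ - 1 + n) := by
    intro y hy
    rw [Set.uIoc_of_le zero_le_one] at hy
    rw [Real.rpow_add hy.1, Real.rpow_natCast]
    ring
  have hexp : γ - 1 + n + 1 = γ + n := by ring
  rw [intervalIntegral.integral_congr_ae (ae_of_all _ hpow), intervalIntegral.integral_const_mul,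
    integral_rpow (Or.inl (by linarith [n.cast_nonneg (α := ℝ)])), hexp, Real.one_rpow,
    Real.zero_rpow (by positivity)]
  ring

theorem lintegral_ofReal_one_sub_pow_betaOne (hγ : 0 < γ) (n : ℕ) :
    ∫⁻ v, ENNReal.ofReal ((1 - v) ^ n) ∂betaOne γ = ENNReal.ofReal (γ / (γ + n)) := by
  rw [lintegral_ofReal_betaOne hγ (by fun_prop) fun v hv => pow_nonneg (sub_nonneg.2 hv.2) n]
  simp_rw [sub_sub_cancel, integral_pow_mul_const_mul_rpow_sub_one hγ n]

theorem lintegral_ofReal_one_sub_betaOne (hγ : 0 < γ) :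
    ∫⁻ v, ENNReal.ofReal (1 - v) ∂betaOne γ = ENNReal.ofReal (γ / (γ + 1)) := by
  simpa using lintegral_ofReal_one_sub_pow_betaOne hγ 1

theorem lintegral_ofReal_id_betaOne (hγ : 0 < γ) :
    ∫⁻ v, ENNReal.ofReal v ∂betaOne γ = ENNReal.ofReal (1 / (γ + 1)) := by
  rw [lintegral_ofReal_betaOne (h := fun v => v) hγ continuous_id fun v hv => hv.1]
  have hI := intervalIntegrable_pow_mul_const_mul_rpow_sub_one hγ
  have hsplit : ∫ y in (0 : ℝ)..1, (1 - y) * (γ * y ^ (γ - 1)) =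
      (∫ y in (0 : ℝ)..1, y ^ 0 * (γ * y ^ (γ - 1))) -
        ∫ y in (0 : ℝ)..1, y ^ 1 * (γ * y ^ (γ - 1)) := by
    rw [← intervalIntegral.integral_sub (hI 0) (hI 1)]
    congr 1 with y
    ring
  simp_rw [hsplit, integral_pow_mul_const_mul_rpow_sub_one hγ]
  congr 1
  field_simp
  ring

theorem lintegral_ofReal_sq_betaOne (hγ : 0 < γ) :
    ∫⁻ v, ENNReal.ofReal (v ^ 2) ∂betaOne γ = ENNReal.ofReal (2 / ((γ + 1) * (γ + 2))) := by
  rw [lintegral_ofReal_betaOne hγ (continuous_pow 2) fun v hv => sq_nonneg v]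
  have hI := intervalIntegrable_pow_mul_const_mul_rpow_sub_one hγ
  have hsplit : ∫ y in (0 : ℝ)..1, (1 - y) ^ 2 * (γ * y ^ (γ - 1)) =
      (∫ y in (0 : ℝ)..1, y ^ 0 * (γ * y ^ (γ - 1))) -
        2 * (∫ y in (0 : ℝ)..1, y ^ 1 * (γ * y ^ (γ - 1))) +
        ∫ y in (0 : ℝ)..1, y ^ 2 * (γ * y ^ (γ - 1)) := by
    rw [← intervalIntegral.integral_const_mul, ← intervalIntegral.integral_sub (hI 0)
      ((hI 1).const_mul 2), ← intervalIntegral.integral_add ((hI 0).sub ((hI 1).const_mul 2))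
      (hI 2)]
    congr 1 with y
    ring
  simp_rw [hsplit, integral_pow_mul_const_mul_rpow_sub_one hγ]
  congr 1
  field_simp
  ring

end BetaOne

section GemSticks

variable {Ω : Type*} [MeasurableSpace Ω] {μ : Measure Ω} {U : ℕ → Ω → ℝ} {γ : ℝ}

theorem lintegral_ofReal_stick_of_betaOne (hU : iIndepFun U μ) (hmU : ∀ i, Measurable (U i))
    (hlaw : ∀ i, μ.map (U i) = betaOne γ) (hγ : 0 < γ) (k : ℕ) :
    ∫⁻ x, ENNReal.ofReal (stick U k x) ∂μ =
      ENNReal.ofReal (1 / (γ + 1)) * ENNReal.ofReal (γ / (γ + 1)) ^ k := by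
  have h := lintegral_ofReal_stick_pow hU hmU hlaw (betaOne_ae_mem_Icc γ) k 1
  simp only [pow_one] at h
  rw [h, lintegral_ofReal_id_betaOne hγ, lintegral_ofReal_one_sub_betaOne hγ]

theorem tsum_lintegral_ofReal_stick_mul_self_of_betaOne (hU : iIndepFun U μ)
    (hmU : ∀ i, Measurable (U i)) (hlaw : ∀ i, μ.map (U i) = betaOne γ) (hγ : 0 < γ) :
    ∑' k, ∫⁻ x, ENNReal.ofReal (stick U k x * stick U k x) ∂μ = ENNReal.ofReal (1 / (γ + 1)) := by
  have hr : γ / (γ + 2) < 1 := (div_lt_one (by positivity)).2 (by linarith)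
  simp_rw [← sq, lintegral_ofReal_stick_pow hU hmU hlaw (betaOne_ae_mem_Icc γ),
    lintegral_ofReal_sq_betaOne hγ, lintegral_ofReal_one_sub_pow_betaOne hγ, Nat.cast_two,
    ENNReal.tsum_mul_left]
  rw [ENNReal.tsum_geometric,
    ENNReal.ofReal_mul_inv_one_sub_ofReal (by positivity) (by positivity) hr]
  congr 1
  field_simp
  ring

theorem lintegral_tsum_ofReal_stick_mul_stick_of_ne {W : ℕ → ℕ → Ω → ℝ}
    (hW : iIndepFun (fun p : ℕ × ℕ => W p.1 p.2) μ) (hmW : ∀ k l, Measurable (W k l))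
    (hlaw : ∀ k l, μ.map (W k l) = betaOne γ) (hγ : 0 < γ) {k1 k2 : ℕ} (hk : k1 ≠ k2) :
    ∫⁻ x, ∑' l, ENNReal.ofReal (stick (W k1) l x * stick (W k2) l x) ∂μ =
      ENNReal.ofReal (1 / (2 * γ + 1)) := by
  have hrow k : iIndepFun (W k) μ :=
    hW.precomp (g := fun l => (k, l)) fun _ _ h => (Prod.mk.inj h).2
  have hmrow k l : Measurable[⨆ p ∈ {p : ℕ × ℕ | p.1 = k}, (borel ℝ).comap (W p.1 p.2)]
      fun x => ENNReal.ofReal (stick (W k) l x) :=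
    ENNReal.measurable_ofReal.comp
      (measurable_stick (fun i => measurable_iSup_comap (i := (k, i)) rfl) l)
  have hterm l : ∫⁻ x, ENNReal.ofReal (stick (W k1) l x * stick (W k2) l x) ∂μ =
      (∫⁻ x, ENNReal.ofReal (stick (W k1) l x) ∂μ) *
        ∫⁻ x, ENNReal.ofReal (stick (W k2) l x) ∂μ := by
    rw [← hW.lintegral_mul_of_disjoint (fun p => hmW p.1 p.2)
      (Set.disjoint_left.2 fun p h1 h2 => hk (h1.symm.trans h2)) (hmrow k1 l) (hmrow k2 l)]
    refine lintegral_congr_ae ?_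
    filter_upwards [ae_forall_mem_Icc_of_map_eq (hmW k1) (hlaw k1) (betaOne_ae_mem_Icc γ)]
      with x hx using ENNReal.ofReal_mul (stick_nonneg hx l)
  have hr : (γ / (γ + 1)) ^ 2 < 1 := pow_lt_one₀ (by positivity)
    ((div_lt_one (by positivity)).2 (by linarith)) two_ne_zero
  rw [lintegral_tsum fun l =>
    (measurable_ofReal_stick_mul_stick (hmW k1) (hmW k2) l l).aemeasurable]
  have hsq l : ENNReal.ofReal (1 / (γ + 1)) * ENNReal.ofReal (γ / (γ + 1)) ^ l *
      (ENNReal.ofReal (1 / (γ + 1)) * ENNReal.ofReal (γ / (γ + 1)) ^ l) =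
      ENNReal.ofReal ((1 / (γ + 1)) ^ 2) * ENNReal.ofReal ((γ / (γ + 1)) ^ 2) ^ l := by
    rw [ENNReal.ofReal_pow (by positivity), ENNReal.ofReal_pow (by positivity)]
    ring
  simp_rw [hterm, lintegral_ofReal_stick_of_betaOne (hrow _) (hmW _) (hlaw _) hγ, hsq,
    ENNReal.tsum_mul_left]
  rw [ENNReal.tsum_geometric,
    ENNReal.ofReal_mul_inv_one_sub_ofReal (by positivity) (by positivity) hr]
  have h2 : 2 * γ + 1 ≠ 0 := by positivity
  congr 1
  rw [div_eq_div_iff (sub_pos.2 hr).ne' h2]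
  field_simp
  ring

end GemSticks

section CommonAtoms

variable {Ω : Type*} [MeasurableSpace Ω] {μ : Measure Ω} {V : ℕ → Ω → ℝ} {W : ℕ → ℕ → Ω → ℝ}

theorem lintegral_ofReal_stick_mul_tsum_eq_lintegral_mul_lintegral (hmV : ∀ k, Measurable (V k))
    (hmW : ∀ k l, Measurable (W k l))
    (hindep : iIndepFun (Sum.elim V (fun p : ℕ × ℕ => W p.1 p.2)) μ) (k1 k2 : ℕ) :
    ∫⁻ x, ENNReal.ofReal (stick V k1 x * stick V k2 x) *
        ∑' l, ENNReal.ofReal (stick (W k1) l x * stick (W k2) l x) ∂μ =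
      (∫⁻ x, ENNReal.ofReal (stick V k1 x * stick V k2 x) ∂μ) *
        ∫⁻ x, ∑' l, ENNReal.ofReal (stick (W k1) l x * stick (W k2) l x) ∂μ := by
  set X : ℕ ⊕ ℕ × ℕ → Ω → ℝ := Sum.elim V fun p => W p.1 p.2
  have hmX : ∀ i, Measurable (X i) := by
    rintro (k | ⟨k, l⟩)
    exacts [hmV k, hmW k l]
  have hVi i := measurable_iSup_comap (X := X) (Set.mem_range_self (f := Sum.inl) i)
  have hWi k l := measurable_iSup_comap (X := X) (Set.mem_range_self (f := Sum.inr) (k, l))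
  refine hindep.lintegral_mul_of_disjoint hmX Set.isCompl_range_inl_range_inr.disjoint
    (measurable_ofReal_stick_mul_stick hVi hVi k1 k2) ?_
  simp_rw [ENNReal.tsum_eq_iSup_nat]
  exact Measurable.iSup fun n => Finset.measurable_sum _ fun l _ =>
    measurable_ofReal_stick_mul_stick (hWi k1) (hWi k2) l l

theorem lintegral_tsum_ofReal_stick_mul_stick {β : ℝ}
    (hW : iIndepFun (fun p : ℕ × ℕ => W p.1 p.2) μ) (hmW : ∀ k l, Measurable (W k l))
    (hlaw : ∀ k l, μ.map (W k l) = betaOne β) (hβ : 0 < β) (k1 k2 : ℕ) :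
    ∫⁻ x, ∑' l, ENNReal.ofReal (stick (W k1) l x * stick (W k2) l x) ∂μ =
      if k1 = k2 then ENNReal.ofReal (1 / (β + 1)) else ENNReal.ofReal (1 / (2 * β + 1)) := by
  split_ifs with hk
  · subst hk
    rw [lintegral_tsum fun l =>
      (measurable_ofReal_stick_mul_stick (hmW k1) (hmW k1) l l).aemeasurable]
    exact tsum_lintegral_ofReal_stick_mul_self_of_betaOne
      (hW.precomp (g := fun l => (k1, l)) fun _ _ h => (Prod.mk.inj h).2) (hmW k1) (hlaw k1) hβ
  · exact lintegral_tsum_ofReal_stick_mul_stick_of_ne hW hmW hlaw hβ hk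

theorem lintegral_tsum_tsum_ofReal_stick_mul {α β : ℝ} (hα : 0 < α) (hβ : 0 < β)
    (hmV : ∀ k, Measurable (V k)) (hmW : ∀ k l, Measurable (W k l))
    (hlawV : ∀ k, μ.map (V k) = betaOne α) (hlawW : ∀ k l, μ.map (W k l) = betaOne β)
    (hindep : iIndepFun (Sum.elim V (fun p : ℕ × ℕ => W p.1 p.2)) μ) :
    ∫⁻ x, ∑' (k1 : ℕ) (k2 : ℕ), ENNReal.ofReal (stick V k1 x * stick V k2 x) *
        ∑' l : ℕ, ENNReal.ofReal (stick (W k1) l x * stick (W k2) l x) ∂μ =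
      ENNReal.ofReal (1 / (1 + α) * (1 / (1 + β)) + α / (1 + α) * (1 / (2 * β + 1))) := by
  have hV : iIndepFun V μ := hindep.precomp (g := Sum.inl) Sum.inl_injective
  have hW : iIndepFun (fun p : ℕ × ℕ => W p.1 p.2) μ :=
    hindep.precomp (g := Sum.inr) Sum.inr_injective
  have hm k1 k2 : Measurable fun x => ENNReal.ofReal (stick V k1 x * stick V k2 x) *
      ∑' l : ℕ, ENNReal.ofReal (stick (W k1) l x * stick (W k2) l x) :=
    (measurable_ofReal_stick_mul_stick hmV hmV k1 k2).mul
      (Measurable.tsum fun l => measurable_ofReal_stick_mul_stick (hmW k1) (hmW k2) l l)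
  have hc : ∫⁻ v, ENNReal.ofReal (1 - v) ∂betaOne α < 1 := by
    rw [lintegral_ofReal_one_sub_betaOne hα]
    exact ENNReal.ofReal_lt_one.2 ((div_lt_one (by positivity)).2 (by linarith))
  have hd : 1 / (2 * β + 1) ≤ 1 / (β + 1) := one_div_le_one_div_of_le (by positivity) (by linarith)
  have hsplit : ENNReal.ofReal (1 / (β + 1)) =
      ENNReal.ofReal (1 / (2 * β + 1)) + ENNReal.ofReal (1 / (β + 1) - 1 / (2 * β + 1)) := by
    rw [← ENNReal.ofReal_add (by positivity) (sub_nonneg.2 hd), add_sub_cancel]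
  rw [lintegral_tsum fun k1 => (Measurable.tsum (hm k1)).aemeasurable]
  simp_rw [lintegral_tsum fun k2 => (hm _ k2).aemeasurable,
    lintegral_ofReal_stick_mul_tsum_eq_lintegral_mul_lintegral hmV hmW hindep,
    lintegral_tsum_ofReal_stick_mul_stick hW hmW hlawW hβ]
  rw [ENNReal.tsum_tsum_mul_ite_eq hsplit,
    tsum_tsum_lintegral_ofReal_stick_mul_stick hV hmV hlawV (betaOne_ae_mem_Icc α) hc,
    tsum_lintegral_ofReal_stick_mul_self_of_betaOne hV hmV hlawV hα, mul_one,
    ← ENNReal.ofReal_mul (sub_nonneg.2 hd), ← ENNReal.ofReal_add (by positivity)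
      (mul_nonneg (sub_nonneg.2 hd) (by positivity))]
  congr 1
  field_simp
  ring

end CommonAtoms

theorem cam_tie_probability_general {Ω : Type*} [MeasurableSpace Ω] (μ : Measure Ω)
    (α β : ℝ) (hα : 0 < α) (hβ : 0 < β)
    (V : ℕ → Ω → ℝ) (W : ℕ → ℕ → Ω → ℝ)
    (hmV : ∀ k, Measurable (V k)) (hmW : ∀ k l, Measurable (W k l))
    (hlawV : ∀ k, μ.map (V k) = betaOne α)
    (hlawW : ∀ k l, μ.map (W k l) = betaOne β)
    (hindep : iIndepFun
      (Sum.elim V (fun p : ℕ × ℕ => W p.1 p.2)) μ) :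
    ∫ x, (∑' (k1 : ℕ) (k2 : ℕ), stick V k1 x * stick V k2 x *
        ∑' l : ℕ, stick (W k1) l x * stick (W k2) l x) ∂μ
      = 1 / (1 + α) * (1 / (1 + β)) + α / (1 + α) * (1 / (2 * β + 1)) := by
  have h01 : ∀ᵐ x ∂μ, (∀ k, V k x ∈ Set.Icc (0 : ℝ) 1) ∧ ∀ k l, W k l x ∈ Set.Icc (0 : ℝ) 1 :=
    (ae_forall_mem_Icc_of_map_eq hmV hlawV (betaOne_ae_mem_Icc α)).and
      (ae_all_iff.2 fun k => ae_forall_mem_Icc_of_map_eq (hmW k) (hlawW k) (betaOne_ae_mem_Icc β))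
  have hm : Measurable fun x => ∑' (k1 : ℕ) (k2 : ℕ), stick V k1 x * stick V k2 x *
      ∑' l : ℕ, stick (W k1) l x * stick (W k2) l x :=
    Measurable.tsum fun k1 => Measurable.tsum fun k2 =>
      ((measurable_stick hmV k1).mul (measurable_stick hmV k2)).mul
        (Measurable.tsum fun l => (measurable_stick (hmW k1) l).mul (measurable_stick (hmW k2) l))
  rw [integral_eq_lintegral_of_nonneg_ae (h01.mono fun x hx => tsum_tsum_stick_mul_nonneg hx.1 hx.2)
      hm.aestronglyMeasurable,
    lintegral_congr_ae (h01.mono fun x hx => ofReal_tsum_tsum_stick hx.1 hx.2),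
    lintegral_tsum_tsum_ofReal_stick_mul hα hβ hmV hmW hlawV hlawW hindep,
    ENNReal.toReal_ofReal (by positivity)]

/-- In the Common Atoms Model with GEM(α) distributional weights (π_k)
and mutually independent GEM(β) observational weight sequences (ω_{l,k})_l, jointly
independent of the π-sticks,
`E[∑_{k1,k2} π_{k1} π_{k2} ∑_l ω_{l,k1} ω_{l,k2}] = (1/(1+α))(1/(1+β)) + (α/(1+α))(1/(2β+1))`,
the probability of a tie between observations in two distinct units. Joint independence
of all stick variables is encoded by `iIndepFun` over `ℕ ⊕ (ℕ × ℕ)`. -/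
theorem cam_tie_probability {Ω : Type*} [MeasurableSpace Ω] (μ : Measure Ω)
    [IsProbabilityMeasure μ] (α β : ℝ) (hα : 0 < α) (hβ : 0 < β)
    (V : ℕ → Ω → ℝ) (W : ℕ → ℕ → Ω → ℝ)
    (hmV : ∀ k, Measurable (V k)) (hmW : ∀ k l, Measurable (W k l))
    (hlawV : ∀ k, μ.map (V k) = betaOne α)
    (hlawW : ∀ k l, μ.map (W k l) = betaOne β)
    (hindep : iIndepFun
      (Sum.elim V (fun p : ℕ × ℕ => W p.1 p.2)) μ) :
    ∫ x, (∑' (k1 : ℕ) (k2 : ℕ), stick V k1 x * stick V k2 x *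
        ∑' l : ℕ, stick (W k1) l x * stick (W k2) l x) ∂μ
      = 1 / (1 + α) * (1 / (1 + β)) + α / (1 + α) * (1 / (2 * β + 1)) :=
  cam_tie_probability_general μ α β hα hβ V W hmV hmW hlawV hlawW hindep
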